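/- For d ≥ n ≥ 500000, E[|Z_d(n) − n/2|] ≥ (1 − 1/(d−1)^{n−1}) · E[|Y_d(n) − n/2|] − 1. -/

import Mathlib

/-- The sum `∑ (a i + 1)` attached to a tuple `a : Fin n → Fin (d−1)`;
`Y_d(n)(a)` is this divided by `d`. -/
def tupleSum (d n : ℕ) (a : Fin n → Fin (d - 1)) : ℕ := ∑ i, ((a i : ℕ) + 1)

/-- The tuples on which `Y_d(n)` is an integer, i.e. the event defining `Z_d(n)`. -/
def intTuples (d n : ℕ) : Finset (Fin n → Fin (d - 1)) :=
  Finset.univ.filter (fun a => d ∣ tupleSum d n a)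

/-!
Write a tuple as `Fin.cons c b` and let `S = tupleSum`. If `d ∤ S(b)`, exactly one head `c = e`
makes `d ∣ S(cons c b)`; if `d ∣ S(b)`, none does. Hence `#intTuples d (k + 1) + #intTuples d k = (d - 1) ^ k`.
On a fibre of the first kind, `|S(cons c b)/d - n/2|` exceeds its value at `e` by at most
`|c - e|/d`, which averages to at most `1/2` over `c`. Fibres of the second kind form at most a
fraction `1/(d - 1)` of all fibres, and on them every term is at most `(d - 1)/2` since `n ≤ d`.
Altogether `E|Y - n/2| ≤ (∑ over integral tuples)/(d - 1)^(n - 1) + 1 ≤ E|Z - n/2| + 1`.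
-/

open Finset

lemma sum_fin_succ_fun {α M : Type*} [Fintype α] [AddCommMonoid M] (m : ℕ)
    (f : (Fin (m + 1) → α) → M) :
    ∑ a, f a = ∑ b : Fin m → α, ∑ c : α, f (Fin.cons c b) := by
  rw [← (Fin.consEquiv fun _ => α).sum_comp, Fintype.sum_prod_type, Finset.sum_comm]
  rfl

lemma tupleSum_cons (d m : ℕ) (c : Fin (d - 1)) (b : Fin m → Fin (d - 1)) :
    tupleSum d (m + 1) (Fin.cons c b) = (c : ℕ) + 1 + tupleSum d m b := by
  simp [tupleSum, Fin.sum_univ_succ]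

lemma le_tupleSum (d n : ℕ) (a : Fin n → Fin (d - 1)) : n ≤ tupleSum d n a := by
  simpa [tupleSum] using card_nsmul_le_sum univ (fun i => (a i : ℕ) + 1) 1 (by simp)

lemma tupleSum_le (d n : ℕ) (a : Fin n → Fin (d - 1)) : tupleSum d n a ≤ n * (d - 1) := by
  simpa [tupleSum] using sum_le_card_nsmul univ (fun i => (a i : ℕ) + 1) (d - 1)
    (fun i _ => (a i).isLt)

lemma not_dvd_succ_add_of_dvd {d T : ℕ} (hT : d ∣ T) (c : Fin (d - 1)) :
    ¬ d ∣ (c : ℕ) + 1 + T := by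
  rw [Nat.dvd_add_left hT]
  exact Nat.not_dvd_of_pos_of_lt (by omega) (by omega)

lemma exists_dvd_succ_add_iff_eq {d T : ℕ} (hd : d ≠ 0) (hT : ¬ d ∣ T) :
    ∃ e : Fin (d - 1), ∀ c : Fin (d - 1), d ∣ (c : ℕ) + 1 + T ↔ c = e := by
  have hr : T % d ≠ 0 := fun h => hT (Nat.dvd_of_mod_eq_zero h)
  have hrd : T % d < d := Nat.mod_lt _ (by omega)
  refine ⟨⟨d - 1 - T % d, by omega⟩, fun c => ?_⟩
  have hsplit : (c : ℕ) + 1 + T = (c + 1 + T % d) + d * (T / d) := by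
    have := Nat.mod_add_div T d; omega
  rw [hsplit, Nat.dvd_add_left (dvd_mul_right d _), Fin.ext_iff]
  constructor
  · intro h
    have := Nat.eq_of_dvd_of_lt_two_mul (by omega) h (by omega)
    simp only; omega
  · intro h
    simp only at h
    exact ⟨1, by omega⟩

lemma card_filter_dvd_succ_add {d : ℕ} (hd : d ≠ 0) (T : ℕ) :
    #{c : Fin (d - 1) | d ∣ (c : ℕ) + 1 + T} = if d ∣ T then 0 else 1 := by
  split_ifs with hT
  · exact card_eq_zero.2 (filter_false_of_mem fun c _ => not_dvd_succ_add_of_dvd hT c)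
  · obtain ⟨e, he⟩ := exists_dvd_succ_add_iff_eq hd hT
    simp [he, filter_eq']

lemma card_intTuples_succ_add {d : ℕ} (hd : d ≠ 0) (k : ℕ) :
    #(intTuples d (k + 1)) + #(intTuples d k) = (d - 1) ^ k := by
  have hfib : #(intTuples d (k + 1)) = #{b : Fin k → Fin (d - 1) | ¬ d ∣ tupleSum d k b} := by
    rw [intTuples, card_filter, sum_fin_succ_fun, card_filter]
    refine sum_congr rfl fun b _ => ?_
    simp_rw [tupleSum_cons, ← card_filter, card_filter_dvd_succ_add hd, ite_not]
  rw [hfib, intTuples, add_comm, card_filter_add_card_filter_not]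
  simp

lemma card_intTuples_succ_le {d : ℕ} (hd : d ≠ 0) (k : ℕ) :
    #(intTuples d (k + 1)) ≤ (d - 1) ^ k :=
  (card_intTuples_succ_add hd k).le.trans' (Nat.le_add_right _ _)

lemma card_intTuples_pos {d : ℕ} (hd : 3 ≤ d) (k : ℕ) : 0 < #(intTuples d (k + 2)) := by
  have h : #(intTuples d (k + 2)) + #(intTuples d (k + 1)) = (d - 1) ^ (k + 1) :=
    card_intTuples_succ_add (by omega) (k + 1)
  have hle := card_intTuples_succ_le (d := d) (by omega) k
  have hlt : (d - 1) ^ k < (d - 1) ^ (k + 1) := pow_lt_pow_right₀ (by omega) (by omega)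
  omega

lemma sum_abs_sub_le {D : ℕ} (e : Fin D) :
    ∑ c : Fin D, |(c : ℝ) - e| ≤ D * (D - 1) / 2 := by
  have hsum : ∑ c : Fin D, (c : ℝ) = D * (D - 1) / 2 := by
    rw [Fin.sum_univ_eq_sum_range (fun c => (c : ℝ)), ← Nat.cast_sum, Finset.sum_range_id]
    rcases Nat.eq_zero_or_pos D with rfl | hD
    · simp
    · rw [Nat.cast_div (Nat.even_mul_pred_self D).two_dvd (by norm_num)]
      push_cast [Nat.cast_pred hD]; ring
  obtain hD | hD : D = 1 ∨ 2 ≤ D := by have := e.isLt; omega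
  · subst hD; simp [Subsingleton.elim e 0]
  set L : ℝ := D - 1
  have hL : 0 < L := by
    have : (2 : ℝ) ≤ D := by exact_mod_cast hD
    linarith
  -- summed over `c`, the terms in `e` cancel
  have hpt : ∀ c : Fin D, L * |(c : ℝ) - e| ≤ L * c + L * e - 2 * c * e := by
    intro c
    have hc : (c : ℝ) + 1 ≤ D := by exact_mod_cast c.isLt
    have he : (e : ℝ) + 1 ≤ D := by exact_mod_cast e.isLt
    have hc0 : (0 : ℝ) ≤ c := by positivity
    have he0 : (0 : ℝ) ≤ e := by positivity
    rcases le_total (c : ℝ) e with h | h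
    · rw [abs_of_nonpos (by linarith)]; nlinarith
    · rw [abs_of_nonneg (by linarith)]; nlinarith
  have := sum_le_sum fun c (_ : c ∈ univ) => hpt c
  rw [← mul_sum, sum_sub_distrib, sum_add_distrib, ← mul_sum, ← sum_mul, ← sum_mul, ← mul_sum,
    hsum] at this
  simp only [sum_const, card_univ, Fintype.card_fin, nsmul_eq_mul] at this
  rw [← mul_le_mul_iff_of_pos_left hL]
  nlinarith

lemma sum_abs_cons_sub_le {d m : ℕ} (b : Fin m → Fin (d - 1)) (e : Fin (d - 1)) (q : ℝ) :
    ∑ c : Fin (d - 1), |(tupleSum d (m + 1) (Fin.cons c b) : ℝ) / d - q|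
      ≤ (d - 1) * |(tupleSum d (m + 1) (Fin.cons e b) : ℝ) / d - q| + (d - 1) / 2 := by
  have hd : 2 ≤ d := by have := e.isLt; omega
  have hcard : ((d - 1 : ℕ) : ℝ) = d - 1 := by rw [Nat.cast_pred (by omega)]
  have hpt : ∀ c : Fin (d - 1), |(tupleSum d (m + 1) (Fin.cons c b) : ℝ) / d - q|
      ≤ |(tupleSum d (m + 1) (Fin.cons e b) : ℝ) / d - q| + |(c : ℝ) - e| / d := by
    intro c
    have hdiff : (tupleSum d (m + 1) (Fin.cons c b) : ℝ) / d
        - (tupleSum d (m + 1) (Fin.cons e b) : ℝ) / d = ((c : ℝ) - e) / d := by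
      simp only [tupleSum_cons]; push_cast; ring
    have := abs_sub_le ((tupleSum d (m + 1) (Fin.cons c b) : ℝ) / d)
      ((tupleSum d (m + 1) (Fin.cons e b) : ℝ) / d) q
    rw [hdiff, abs_div, Nat.abs_cast] at this
    linarith
  have hdist : (∑ c : Fin (d - 1), |(c : ℝ) - e|) / d ≤ (d - 1) / 2 := by
    rw [div_le_div_iff₀ (by positivity) (by norm_num)]
    have := sum_abs_sub_le e
    rw [hcard] at this
    nlinarith
  calc _ ≤ ∑ c : Fin (d - 1), (|(tupleSum d (m + 1) (Fin.cons e b) : ℝ) / d - q|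
          + |(c : ℝ) - e| / d) := sum_le_sum fun c _ => hpt c
    _ = (d - 1) * |(tupleSum d (m + 1) (Fin.cons e b) : ℝ) / d - q|
          + (∑ c : Fin (d - 1), |(c : ℝ) - e|) / d := by
        rw [sum_add_distrib, sum_const, card_univ, Fintype.card_fin, nsmul_eq_mul, hcard,
          sum_div]
    _ ≤ _ := by linarith

lemma abs_tupleSum_div_sub_half_le {d n : ℕ} (hd : 0 < d) (a : Fin n → Fin (d - 1)) :
    |(tupleSum d n a : ℝ) / d - n / 2| ≤ n * (d - 2) / (2 * d) := by
  have hlo : (n : ℝ) ≤ tupleSum d n a := by exact_mod_cast le_tupleSum d n a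
  have hhi : (tupleSum d n a : ℝ) ≤ n * (d - 1) := by
    have := tupleSum_le d n a
    rw [← Nat.cast_pred hd]
    exact_mod_cast this
  have hdR : (0 : ℝ) < d := by exact_mod_cast hd
  have hform : (tupleSum d n a : ℝ) / d - n / 2 = (2 * tupleSum d n a - n * d) / (2 * d) := by
    field_simp
  rw [hform, abs_div, abs_of_pos (by positivity : (0 : ℝ) < 2 * d),
    div_le_div_iff_of_pos_right (by positivity), abs_le]
  constructor <;> nlinarith

lemma sum_abs_cons_sub_half_le {d m : ℕ} (hmd : m + 1 ≤ d) (b : Fin m → Fin (d - 1)) :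
    ∑ c : Fin (d - 1), |(tupleSum d (m + 1) (Fin.cons c b) : ℝ) / d - ((m + 1 : ℕ) : ℝ) / 2|
      ≤ (d - 1) * ∑ c with d ∣ tupleSum d (m + 1) (Fin.cons c b),
            |(tupleSum d (m + 1) (Fin.cons c b) : ℝ) / d - ((m + 1 : ℕ) : ℝ) / 2|
        + (d - 1) / 2 + if d ∣ tupleSum d m b then ((d : ℝ) - 1) ^ 2 / 2 else 0 := by
  by_cases hb : d ∣ tupleSum d m b
  · have hnone : ({c : Fin (d - 1) | d ∣ tupleSum d (m + 1) (Fin.cons c b)} : Finset _) = ∅ :=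
      filter_false_of_mem fun c _ => by
        rw [tupleSum_cons]; exact not_dvd_succ_add_of_dvd hb c
    have hpt : ∀ c : Fin (d - 1),
        |(tupleSum d (m + 1) (Fin.cons c b) : ℝ) / d - ((m + 1 : ℕ) : ℝ) / 2| ≤ (d - 1) / 2 := by
      intro c
      have hd : (2 : ℝ) ≤ d := by have := c.isLt; exact_mod_cast (by omega : 2 ≤ d)
      have hmd : ((m + 1 : ℕ) : ℝ) ≤ d := by exact_mod_cast hmd
      refine (abs_tupleSum_div_sub_half_le (by omega) _).trans ?_
      rw [div_le_div_iff₀ (by positivity) (by norm_num)]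
      nlinarith
    have hcard : ((d - 1 : ℕ) : ℝ) = d - 1 := by rw [Nat.cast_pred (by omega)]
    calc _ ≤ ∑ _c : Fin (d - 1), ((d : ℝ) - 1) / 2 := sum_le_sum fun c _ => hpt c
      _ = ((d : ℝ) - 1) ^ 2 / 2 := by
        rw [sum_const, card_univ, Fintype.card_fin, nsmul_eq_mul, hcard]; ring
      _ ≤ _ := by
        rw [hnone, sum_empty, if_pos hb, mul_zero, zero_add]
        have : (1 : ℝ) ≤ d := by exact_mod_cast (by omega : 1 ≤ d)
        linarith
  · obtain ⟨e, he⟩ := exists_dvd_succ_add_iff_eq (by omega) hb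
    have hone : ({c : Fin (d - 1) | d ∣ tupleSum d (m + 1) (Fin.cons c b)} : Finset _) = {e} := by
      ext c; simp [tupleSum_cons, he]
    rw [hone, sum_singleton, if_neg hb, add_zero]
    exact sum_abs_cons_sub_le b e _

lemma sum_abs_sub_half_le {d m : ℕ} (hmd : m + 2 ≤ d) :
    ∑ a : Fin (m + 2) → Fin (d - 1), |(tupleSum d (m + 2) a : ℝ) / d - ((m + 2 : ℕ) : ℝ) / 2|
      ≤ (d - 1) * (∑ a ∈ intTuples d (m + 2),
          |(tupleSum d (m + 2) a : ℝ) / d - ((m + 2 : ℕ) : ℝ) / 2| + ((d : ℝ) - 1) ^ (m + 1)) := by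
  set D : ℝ := d - 1
  have hcast : ((d - 1 : ℕ) : ℝ) = D := by rw [Nat.cast_pred (by omega)]
  have hint : (#(intTuples d (m + 1)) : ℝ) ≤ D ^ m := by
    rw [← hcast]; exact_mod_cast card_intTuples_succ_le (by omega) m
  have hfib : ∑ a ∈ intTuples d (m + 2), |(tupleSum d (m + 2) a : ℝ) / d - ((m + 2 : ℕ) : ℝ) / 2|
      = ∑ b : Fin (m + 1) → Fin (d - 1), ∑ c with d ∣ tupleSum d (m + 2) (Fin.cons c b),
          |(tupleSum d (m + 2) (Fin.cons c b) : ℝ) / d - ((m + 2 : ℕ) : ℝ) / 2| := by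
    rw [intTuples, sum_filter, sum_fin_succ_fun]
    simp_rw [sum_filter]
  rw [hfib, sum_fin_succ_fun]
  calc _ ≤ ∑ b : Fin (m + 1) → Fin (d - 1),
        (D * ∑ c with d ∣ tupleSum d (m + 2) (Fin.cons c b),
            |(tupleSum d (m + 2) (Fin.cons c b) : ℝ) / d - ((m + 2 : ℕ) : ℝ) / 2|
          + D / 2 + if d ∣ tupleSum d (m + 1) b then D ^ 2 / 2 else 0) :=
        sum_le_sum fun b _ => sum_abs_cons_sub_half_le hmd b
    _ = D * ∑ b : Fin (m + 1) → Fin (d - 1), ∑ c with d ∣ tupleSum d (m + 2) (Fin.cons c b),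
            |(tupleSum d (m + 2) (Fin.cons c b) : ℝ) / d - ((m + 2 : ℕ) : ℝ) / 2|
          + D ^ (m + 1) * (D / 2) + #(intTuples d (m + 1)) * (D ^ 2 / 2) := by
        rw [sum_add_distrib, sum_add_distrib, ← mul_sum, ← sum_filter, sum_const, sum_const,
          card_univ, Fintype.card_fun, Fintype.card_fin, Fintype.card_fin, nsmul_eq_mul,
          nsmul_eq_mul, Nat.cast_pow, hcast]
        rfl
    _ ≤ _ := by
      have := mul_le_mul_of_nonneg_right hint (by positivity : 0 ≤ D ^ 2 / 2)
      rw [pow_succ] at this ⊢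
      nlinarith

/-- For `d ≥ n ≥ 500000`,
`E[|Z_d(n) − n/2|] ≥ (1 − 1/(d−1)^{n−1}) · E[|Y_d(n) − n/2|] − 1`, where `Y_d(n)`
is the sum of `n` i.i.d. uniforms on `{1/d, …, (d−1)/d}` and `Z_d(n)` is `Y_d(n)`
conditioned on being an integer. -/
theorem stmt_13 (d n : ℕ) (hnd : n ≤ d) (hn : 500000 ≤ n) :
    (∑ a ∈ intTuples d n, |(tupleSum d n a : ℝ) / d - (n : ℝ) / 2|)
        / ((intTuples d n).card : ℝ)
    ≥ (1 - 1 / ((d : ℝ) - 1) ^ (n - 1)) *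
        ((∑ a : Fin n → Fin (d - 1), |(tupleSum d n a : ℝ) / d - (n : ℝ) / 2|)
          / ((d : ℝ) - 1) ^ n)
      - 1 := by
  obtain ⟨m, rfl⟩ : ∃ m, n = m + 2 := ⟨n - 2, by omega⟩
  have hd : 3 ≤ d := by omega
  have hC : (0 : ℝ) < (intTuples d (m + 2)).card := by exact_mod_cast card_intTuples_pos hd m
  have hCM : ((intTuples d (m + 2)).card : ℝ) ≤ ((d : ℝ) - 1) ^ (m + 1) := by
    rw [← Nat.cast_pred (by omega)]
    exact_mod_cast card_intTuples_succ_le (by omega) (m + 1)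
  have hW := sum_abs_sub_half_le (show m + 2 ≤ d from hnd)
  set N := ∑ a ∈ intTuples d (m + 2), |(tupleSum d (m + 2) a : ℝ) / d - ((m + 2 : ℕ) : ℝ) / 2|
  set W := ∑ a : Fin (m + 2) → Fin (d - 1),
    |(tupleSum d (m + 2) a : ℝ) / d - ((m + 2 : ℕ) : ℝ) / 2|
  set C : ℝ := ↑(intTuples d (m + 2)).card
  set M : ℝ := ((d : ℝ) - 1) ^ (m + 1)
  have hD : (2 : ℝ) ≤ d - 1 := by
    have : (3 : ℝ) ≤ d := by exact_mod_cast hd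
    linarith
  have hM : 1 ≤ M := one_le_pow₀ (by linarith)
  have hN : 0 ≤ N := sum_nonneg fun _ _ => abs_nonneg _
  rw [ge_iff_le, show m + 2 - 1 = m + 1 from rfl, pow_succ]
  calc (1 - 1 / M) * (W / (M * (d - 1))) - 1
      ≤ W / (M * (d - 1)) - 1 := by
        gcongr
        exact mul_le_of_le_one_left (by positivity) (sub_le_self 1 (by positivity))
    _ ≤ (N + M) / M - 1 := by
        gcongr ?_ - 1
        rw [mul_comm M, ← div_div]
        gcongr
        rwa [div_le_iff₀' (by linarith)]
    _ = N / M := by field_simp; ring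
    _ ≤ N / C := div_le_div_of_nonneg_left hN hC hCM
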